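/- The function L(x) = (1/a)·log(e^{ax} + e^{-ax} + b) with a > 0 and b ≥ 0 is convex on ℝ. -/

import Mathlib

/-!
Since `exp u + exp (-u) = 2 cosh u`, the function is `(1/a) • h (a x)` with
`h u = log (2 cosh u + b)`, and convexity survives a linear substitution and a nonnegative factor.
For `h` itself, `h' = 2 sinh u / (2 cosh u + b)`, and `cosh² - sinh² = 1` turns the quotient rule into
`h'' = (4 + 2 b cosh u) / (2 cosh u + b)² ≥ 0`.
-/

open Real Set

lemma two_cosh_add_pos {b : ℝ} (hb : 0 ≤ b) (x : ℝ) : 0 < 2 * cosh x + b := by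
  positivity

lemma hasDerivAt_log_two_cosh_add {b : ℝ} (hb : 0 ≤ b) (x : ℝ) :
    HasDerivAt (fun u => log (2 * cosh u + b)) (2 * sinh x / (2 * cosh x + b)) x :=
  (((hasDerivAt_cosh x).const_mul 2).add_const b).log (two_cosh_add_pos hb x).ne'

lemma hasDerivAt_two_sinh_div_two_cosh_add {b : ℝ} (hb : 0 ≤ b) (x : ℝ) :
    HasDerivAt (fun u => 2 * sinh u / (2 * cosh u + b))
      ((4 + 2 * b * cosh x) / (2 * cosh x + b) ^ 2) x :=
  (((hasDerivAt_sinh x).const_mul 2).div (((hasDerivAt_cosh x).const_mul 2).add_const b)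
    (two_cosh_add_pos hb x).ne').congr_deriv <| by
      congr 1
      linear_combination 4 * cosh_sq_sub_sinh_sq x

theorem convexOn_log_two_cosh_add {b : ℝ} (hb : 0 ≤ b) :
    ConvexOn ℝ univ (fun u => log (2 * cosh u + b)) := by
  refine convexOn_of_hasDerivWithinAt2_nonneg convex_univ ?_
    (fun x _ => (hasDerivAt_log_two_cosh_add hb x).hasDerivWithinAt)
    (fun x _ => (hasDerivAt_two_sinh_div_two_cosh_add hb x).hasDerivWithinAt) fun x _ => ?_
  · exact (continuous_iff_continuousAt.2 fun x =>
      (hasDerivAt_log_two_cosh_add hb x).continuousAt).continuousOn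
  · have := cosh_pos x
    positivity

theorem stmt_0 (a b : ℝ) (ha : 0 < a) (hb : 0 ≤ b) :
    ConvexOn ℝ Set.univ
      (fun x : ℝ => (1 / a) * Real.log (Real.exp (a * x) + Real.exp (-(a * x)) + b)) := by
  refine (((convexOn_log_two_cosh_add hb).comp_linearMap (LinearMap.lsmul ℝ ℝ a)).smul
    (one_div_nonneg.2 ha.le)).congr fun x _ => ?_
  simp [cosh_eq, mul_div_cancel₀]
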